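/- Let ρ : ℝ^{2d} → Mat_{2d}(ℝ) be differentiable with entries ρ^L{}_I, and let T_{IJK} : ℝ^{2d} → ℝ be arbitrary differentiable functions. For smooth A, B : ℝ^{2d} → ℝ^{2d} define the generalized C-bracket [[A,B]]^J := ρ^L{}_I ( A^I ∂_L B^J − ½ η^{IJ} A^K ∂_L B_K − B^I ∂_L A^J + ½ η^{IJ} B^K ∂_L A_K ) + ½ T_{IK}{}^J A^I B^K. Then for every differentiable f : ℝ^{2d} → ℝ the Leibniz rule holds: [[A, fB]]^J = f·[[A,B]]^J + (ρ(A)f)·B^J − ⟨A,B⟩·(𝒟_+f)^J, where ρ(A)f := ρ^L{}_I A^I ∂_L f, ⟨A,B⟩ := η_{IJ} A^I B^J and (𝒟_+f)^J := ½ η^{IJ} ρ^L{}_I ∂_L f. -/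

import Mathlib

open scoped BigOperators

noncomputable section

/-- Doubled index set: `I = 1,…,2d`, realized as `Fin d ⊕ Fin d`. -/
abbrev DIdx (d : ℕ) := Fin d ⊕ Fin d

/-- The doubled space `ℝ^{2d}`. -/
abbrev DSpace (d : ℕ) := DIdx d → ℝ

/-- The constant O(d,d)-invariant metric `η = ((0,1_d),(1_d,0))`; numerically `η⁻¹ = η`. -/
def eta {d : ℕ} : DIdx d → DIdx d → ℝ
  | Sum.inl i, Sum.inr j => if i = j then 1 else 0
  | Sum.inr i, Sum.inl j => if i = j then 1 else 0
  | _, _ => 0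

/-- Partial derivative `∂_I f (x)`. -/
def pd {d : ℕ} (f : DSpace d → ℝ) (I : DIdx d) (x : DSpace d) : ℝ :=
  fderiv ℝ f x (Pi.single I 1)

/-- Lowered components `A_I := η_{IJ} A^J`. -/
def low {d : ℕ} (A : DSpace d → DSpace d) (I : DIdx d) : DSpace d → ℝ :=
  fun x => ∑ J, eta I J * A x J

/-- Raised derivative `∂^I f := η^{IJ} ∂_J f`. -/
def pdU {d : ℕ} (f : DSpace d → ℝ) (I : DIdx d) (x : DSpace d) : ℝ :=
  ∑ J, eta I J * pd f J x

/-- The generalized C-bracket with anchor `ρ` and twist `T`: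
`[[A,B]]^J := ρ^L{}_I ( A^I ∂_L B^J − ½ η^{IJ} A^K ∂_L B_K − B^I ∂_L A^J + ½ η^{IJ} B^K ∂_L A_K )
  + ½ T_{IK}{}^J A^I B^K`. -/
def cbGen {d : ℕ} (ρ : DSpace d → DIdx d → DIdx d → ℝ)
    (T : DSpace d → DIdx d → DIdx d → DIdx d → ℝ)
    (A B : DSpace d → DSpace d) (J : DIdx d) (x : DSpace d) : ℝ :=
  (∑ L, ∑ I, ρ x L I *
      (A x I * pd (fun y => B y J) L x
        - (1/2) * eta I J * ∑ K, A x K * pd (low B K) L x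
        - B x I * pd (fun y => A y J) L x
        + (1/2) * eta I J * ∑ K, B x K * pd (low A K) L x))
  + (1/2) * ∑ I, ∑ K, (∑ L, T x I K L * eta L J) * A x I * B x K

/-- The derivative `(𝒟₊f)^J := ½ η^{IJ} ρ^L{}_I ∂_L f`. -/
def Dplus {d : ℕ} (ρ : DSpace d → DIdx d → DIdx d → ℝ) (f : DSpace d → ℝ)
    (J : DIdx d) (x : DSpace d) : ℝ :=
  (1/2) * ∑ I, ∑ L, eta J I * ρ x L I * pd f L x

/-- The Leibniz rule for the generalized C-bracket:
`[[A, fB]]^J = f [[A,B]]^J + (ρ(A)f) B^J − ⟨A,B⟩ (𝒟₊f)^J`. -/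
lemma eta_symm {d : ℕ} (I K : DIdx d) : eta I K = eta K I := by
  cases I <;> cases K <;> simp [eta, eq_comm]

lemma pd_mul {d : ℕ} (f g : DSpace d → ℝ) (hf : Differentiable ℝ f) (hg : Differentiable ℝ g)
    (L : DIdx d) (x : DSpace d) :
    pd (fun y => f y * g y) L x = pd f L x * g x + f x * pd g L x := by
  unfold pd
  rw [fderiv_fun_mul (hf x) (hg x)]
  simp
  ring

theorem statement7 {d : ℕ} (ρ : DSpace d → DIdx d → DIdx d → ℝ)
    (T : DSpace d → DIdx d → DIdx d → DIdx d → ℝ)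
    (hρ : ∀ K J : DIdx d, Differentiable ℝ fun x => ρ x K J)
    (hT : ∀ I J K : DIdx d, Differentiable ℝ fun x => T x I J K)
    (A B : DSpace d → DSpace d) (hA : ContDiff ℝ (⊤ : ℕ∞) A) (hB : ContDiff ℝ (⊤ : ℕ∞) B)
    (f : DSpace d → ℝ) (hf : Differentiable ℝ f) (J : DIdx d) (x : DSpace d) :
    cbGen ρ T A (fun y I => f y * B y I) J x
      = f x * cbGen ρ T A B J x
        + (∑ L, ∑ I, ρ x L I * A x I * pd f L x) * B x J
        - (∑ I, ∑ K, eta I K * A x I * B x K) * Dplus ρ f J x := by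
  have hBk : ∀ K : DIdx d, Differentiable ℝ fun y => B y K := fun K =>
    (differentiable_pi.mp (hB.differentiable (by simp))) K
  have hlowB : ∀ K : DIdx d, Differentiable ℝ (low B K) := by
    intro K
    unfold low
    exact Differentiable.fun_sum fun i _ => (differentiable_const _).mul (hBk i)
  have hlow_eq : ∀ K : DIdx d, low (fun y I => f y * B y I) K = fun y => f y * low B K y := by
    intro K
    funext y
    simp only [low]
    rw [Finset.mul_sum]
    exact Finset.sum_congr rfl fun i _ => by ring
  have h1 : ∀ L : DIdx d, pd (fun y => f y * B y J) L x
      = pd f L x * B x J + f x * pd (fun y => B y J) L x :=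
    fun L => pd_mul f (fun y => B y J) hf (hBk J) L x
  have h2 : ∀ K L : DIdx d, pd (low (fun y I => f y * B y I) K) L x
      = pd f L x * low B K x + f x * pd (low B K) L x := by
    intro K L
    rw [hlow_eq K]
    exact pd_mul f (low B K) hf (hlowB K) L x
  have hP : (∑ K : DIdx d, A x K * low B K x)
      = ∑ I : DIdx d, ∑ K : DIdx d, eta I K * A x I * B x K := by
    simp only [low, Finset.mul_sum]
    exact Finset.sum_congr rfl fun K _ => Finset.sum_congr rfl fun M _ => by
      rw [eta_symm]; ring
  have hD : (∑ L : DIdx d, ∑ I : DIdx d, ρ x L I * eta I J * pd f L x)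
      = ∑ I : DIdx d, ∑ L : DIdx d, eta J I * ρ x L I * pd f L x := by
    rw [Finset.sum_comm]
    exact Finset.sum_congr rfl fun I _ => Finset.sum_congr rfl fun L _ => by
      rw [eta_symm J I]; ring
  have key : ∀ L I : DIdx d,
      ρ x L I *
        (A x I * (pd f L x * B x J + f x * pd (fun y => B y J) L x) -
            1 / 2 * eta I J *
              ∑ K : DIdx d, A x K * (pd f L x * low B K x + f x * pd (low B K) L x) -
          f x * B x I * pd (fun y => A y J) L x +
          1 / 2 * eta I J * ∑ K : DIdx d, f x * B x K * pd (low A K) L x)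
      = f x * (ρ x L I *
          (A x I * pd (fun y => B y J) L x -
              1 / 2 * eta I J * ∑ K : DIdx d, A x K * pd (low B K) L x -
            B x I * pd (fun y => A y J) L x +
            1 / 2 * eta I J * ∑ K : DIdx d, B x K * pd (low A K) L x))
        + (ρ x L I * A x I * pd f L x) * B x J
        - (1 / 2 * (∑ K : DIdx d, A x K * low B K x)) * (ρ x L I * eta I J * pd f L x) := by
    intro L I
    have e1 : ∑ K : DIdx d, A x K * (pd f L x * low B K x + f x * pd (low B K) L x)
        = pd f L x * (∑ K : DIdx d, A x K * low B K x)
          + f x * ∑ K : DIdx d, A x K * pd (low B K) L x := by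
      rw [Finset.mul_sum, Finset.mul_sum, ← Finset.sum_add_distrib]
      exact Finset.sum_congr rfl fun K _ => by ring
    have e2 : ∑ K : DIdx d, f x * B x K * pd (low A K) L x
        = f x * ∑ K : DIdx d, B x K * pd (low A K) L x := by
      rw [Finset.mul_sum]
      exact Finset.sum_congr rfl fun K _ => by ring
    rw [e1, e2]
    ring
  have sum_split : ∀ {ι : Type} [Fintype ι] (g h w : ι → ℝ) (c b k : ℝ),
      ∑ i, (c * g i + h i * b - k * w i)
        = c * ∑ i, g i + (∑ i, h i) * b - k * ∑ i, w i := by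
    intro ι _ g h w c b k
    rw [Finset.mul_sum, Finset.sum_mul, Finset.mul_sum, ← Finset.sum_add_distrib,
      ← Finset.sum_sub_distrib]
  have hT2 : (1/2 : ℝ) * ∑ I : DIdx d, ∑ K : DIdx d,
        (∑ L : DIdx d, T x I K L * eta L J) * A x I * (f x * B x K)
      = f x * ((1/2) * ∑ I : DIdx d, ∑ K : DIdx d,
        (∑ L : DIdx d, T x I K L * eta L J) * A x I * B x K) := by
    simp only [Finset.mul_sum]
    exact Finset.sum_congr rfl fun I _ => Finset.sum_congr rfl fun K _ => by ring
  simp only [cbGen, Dplus, h1, h2]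
  calc (∑ L : DIdx d, ∑ I : DIdx d,
          ρ x L I *
            (A x I * (pd f L x * B x J + f x * pd (fun y => B y J) L x) -
                1 / 2 * eta I J *
                  ∑ K : DIdx d, A x K * (pd f L x * low B K x + f x * pd (low B K) L x) -
              f x * B x I * pd (fun y => A y J) L x +
              1 / 2 * eta I J * ∑ K : DIdx d, f x * B x K * pd (low A K) L x))
        + 1/2 * ∑ I : DIdx d, ∑ K : DIdx d,
            (∑ L : DIdx d, T x I K L * eta L J) * A x I * (f x * B x K)
      = (∑ L : DIdx d, (f x * (∑ I : DIdx d, ρ x L I *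
            (A x I * pd (fun y => B y J) L x -
                1 / 2 * eta I J * ∑ K : DIdx d, A x K * pd (low B K) L x -
              B x I * pd (fun y => A y J) L x +
              1 / 2 * eta I J * ∑ K : DIdx d, B x K * pd (low A K) L x))
          + (∑ I : DIdx d, ρ x L I * A x I * pd f L x) * B x J
          - (1 / 2 * (∑ K : DIdx d, A x K * low B K x))
              * ∑ I : DIdx d, ρ x L I * eta I J * pd f L x))
        + 1/2 * ∑ I : DIdx d, ∑ K : DIdx d,
            (∑ L : DIdx d, T x I K L * eta L J) * A x I * (f x * B x K) := by
        refine congrArg₂ (· + ·) (Finset.sum_congr rfl fun L _ => ?_) rfl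
        rw [← sum_split]
        exact Finset.sum_congr rfl fun I _ => key L I
    _ = (f x * ∑ L : DIdx d, ∑ I : DIdx d, ρ x L I *
            (A x I * pd (fun y => B y J) L x -
                1 / 2 * eta I J * ∑ K : DIdx d, A x K * pd (low B K) L x -
              B x I * pd (fun y => A y J) L x +
              1 / 2 * eta I J * ∑ K : DIdx d, B x K * pd (low A K) L x)
          + (∑ L : DIdx d, ∑ I : DIdx d, ρ x L I * A x I * pd f L x) * B x J
          - (1 / 2 * (∑ K : DIdx d, A x K * low B K x))
              * ∑ L : DIdx d, ∑ I : DIdx d, ρ x L I * eta I J * pd f L x)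
        + 1/2 * ∑ I : DIdx d, ∑ K : DIdx d,
            (∑ L : DIdx d, T x I K L * eta L J) * A x I * (f x * B x K) := by
        rw [sum_split]
    _ = _ := by
        rw [hT2, hP, hD]
        ring
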